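/- Suppose lim_{x→a⁺} s(x) = ∞, lim_{x→b} s(x)·M[a,x] = ∞, μ extends continuously to x = a with a finite value μ(a), and μ(x) converges to a limit in [−∞,∞] as x → b. If M[a,b] = ∫_a^b m(u) du = ∞, then lim_{x→b} μ(x) = 0. -/

import Mathlib

/-!
The key identity is `(1/s)' = μ m`, so that `1/s(x) - 1/s(x₁) = ∫_{x₁}^x μ m` while
`M[a,x] - M[a,x₁] = ∫_{x₁}^x m`, and `M[a,x] → ∞` as `x → b` because `m` is not integrable
on `(a,b)`. If `μ ≤ r < 0` near `b`, then `1/s(x) ≤ 1/s(x₁) + r (M[a,x] - M[a,x₁]) → -∞`,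
contradicting `s > 0`. If `μ ≥ r > 0` near `b`, then `1/s` increases and
`s(x) (M[a,x] - M[a,x₁]) ≤ 1/r`, so `s(x) M[a,x]` stays bounded, contradicting
`s(x) M[a,x] → ∞`. Hence the limit of `μ` at `b`, which exists in `[-∞, ∞]`, is `0`.
-/

open MeasureTheory Filter Set Topology
open scoped Classical

noncomputable section

/-- The state interval `(a, b)` where `a` is real and `b ∈ (a, ∞]`. -/
def stInt (a : ℝ) (b : EReal) : Set ℝ := {x : ℝ | a < x ∧ (x : EReal) < b}

/-- The filter of approach to the right endpoint `b ∈ (a, ∞]`: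
`atTop` when `b = ∞`, and the left-neighborhood filter of `b` otherwise. -/
def atB (b : EReal) : Filter ℝ :=
  if b = ⊤ then Filter.atTop else nhdsWithin b.toReal (Set.Iio b.toReal)

/-- The scale density `s(x) = exp(-∫_{x₀}^x 2μ/σ²)`. -/
def sDen (μ σ : ℝ → ℝ) (x₀ x : ℝ) : ℝ :=
  Real.exp (-(∫ y in x₀..x, 2 * μ y / (σ y) ^ 2))

/-- The speed density `m(x) = 2/(σ(x)² s(x))`. -/
def mDen (μ σ : ℝ → ℝ) (x₀ x : ℝ) : ℝ :=
  2 / ((σ x) ^ 2 * sDen μ σ x₀ x)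

/-- `M[a,x] = ∫_a^x m(u) du`. -/
def Mab (μ σ : ℝ → ℝ) (x₀ a x : ℝ) : ℝ :=
  ∫ u in Set.Ioo a x, mDen μ σ x₀ u

/-- The time potential `ξ(x) = ∫_{x₀}^x M[a,v] s(v) dv`. -/
def xiF (μ σ : ℝ → ℝ) (x₀ a x : ℝ) : ℝ :=
  ∫ v in x₀..x, Mab μ σ x₀ a v * sDen μ σ x₀ v

/-- The running reward potential `g(x) = ∫_{x₀}^x (∫_a^v c(u) m(u) du) s(v) dv`. -/
def gF (μ σ c : ℝ → ℝ) (x₀ a x : ℝ) : ℝ :=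
  ∫ v in x₀..x, (∫ u in Set.Ioo a v, c u * mDen μ σ x₀ u) * sDen μ σ x₀ v

/-- `h(x) = (∫_a^x (γ c(u) + p μ(u)) m(u) du) / M[a,x]`. -/
def hF (μ σ c : ℝ → ℝ) (x₀ a p γ x : ℝ) : ℝ :=
  (∫ u in Set.Ioo a x, (γ * c u + p * μ u) * mDen μ σ x₀ u) / Mab μ σ x₀ a x

/-- The long-term average reward `F(w,y)` of the `(w,y)`-impulse policy. -/
def FF (μ σ c : ℝ → ℝ) (x₀ a p K γ w y : ℝ) : ℝ :=
  (p * (y - w) - K + γ * (gF μ σ c x₀ a y - gF μ σ c x₀ a w)) /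
    (xiF μ σ x₀ a y - xiF μ σ x₀ a w)

/-- `c̄(b)`: equals `⟨c,π⟩` when `M[a,b] < ∞` and the boundary value `c(b)` otherwise. -/
def cbar (μ σ c : ℝ → ℝ) (x₀ a : ℝ) (b : EReal) (cb : ℝ) : ℝ :=
  if MeasureTheory.IntegrableOn (mDen μ σ x₀) (stInt a b) MeasureTheory.volume then
    (∫ u in stInt a b, c u * mDen μ σ x₀ u) / (∫ u in stInt a b, mDen μ σ x₀ u)
  else cb

lemma isOpen_stInt (a : ℝ) (b : EReal) : IsOpen (stInt a b) :=
  isOpen_Ioi.inter (isOpen_Iio.preimage continuous_coe_real_ereal)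

lemma Icc_subset_stInt {a x y : ℝ} {b : EReal} (hx : a < x) (hy : (y : EReal) < b) :
    Icc x y ⊆ stInt a b :=
  fun _ hu => ⟨hx.trans_le hu.1, (EReal.coe_le_coe_iff.2 hu.2).trans_lt hy⟩

lemma Ioo_subset_stInt {a x : ℝ} {b : EReal} (hx : (x : EReal) < b) : Ioo a x ⊆ stInt a b :=
  fun _ hu => ⟨hu.1, (EReal.coe_lt_coe_iff.2 hu.2).trans hx⟩

lemma coe_lt_of_mem_stInt {a x : ℝ} {b : EReal} (hx : x ∈ stInt a b) : (a : EReal) < b :=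
  (EReal.coe_lt_coe_iff.2 hx.1).trans hx.2

instance ordConnected_stInt (a : ℝ) (b : EReal) : (stInt a b).OrdConnected :=
  ⟨fun _ hx _ hy => Icc_subset_stInt hx.1 hy.2⟩

lemma atB_hasBasis {b : EReal} (hb : b ≠ ⊥) :
    (atB b).HasBasis (fun c : ℝ => (c : EReal) < b) (fun c => stInt c b) := by
  unfold atB
  split_ifs with htop
  · subst htop
    convert atTop_basis_Ioi (α := ℝ) using 2 with c
    · simp
    · ext x; simp [stInt]
  · lift b to ℝ using ⟨htop, hb⟩
    simpa [stInt, Ioo] using nhdsLT_basis b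

instance (b : EReal) : (atB b).NeBot := by
  unfold atB; split_ifs <;> infer_instance

instance (b : EReal) : (atB b).IsCountablyGenerated := by
  unfold atB; split_ifs <;> infer_instance

lemma stInt_mem_atB {c : ℝ} {b : EReal} (h : (c : EReal) < b) : stInt c b ∈ atB b :=
  (atB_hasBasis (ne_bot_of_gt h)).mem_of_mem h

lemma exists_forall_ge_of_eventually_atB {p : ℝ → Prop} {a : ℝ} {b : EReal}
    (hab : (a : EReal) < b) (h : ∀ᶠ x in atB b, p x) :
    ∃ x₁ ∈ stInt a b, ∀ u ∈ stInt a b, x₁ ≤ u → p u := by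
  obtain ⟨c, hc, hp⟩ := (atB_hasBasis (ne_bot_of_gt hab)).eventually_iff.1 h
  obtain ⟨x₁, hx₁c, hx₁⟩ :=
    Filter.nonempty_of_mem (inter_mem (stInt_mem_atB hc) (stInt_mem_atB hab))
  exact ⟨x₁, hx₁, fun u hu hle => hp ⟨hx₁c.1.trans_le hle, hu.2⟩⟩

lemma aecover_Ioo_atB (a : ℝ) (b : EReal) :
    AECover (volume.restrict (stInt a b)) (atB b) (fun x => Ioo a x) where
  ae_eventually_mem := ae_restrict_of_forall_mem (isOpen_stInt a b).measurableSet
    fun _ hu => mem_of_superset (stInt_mem_atB hu.2) fun _ hx => ⟨hu.1, hx.1⟩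
  measurableSet _ := measurableSet_Ioo

lemma tendsto_setIntegral_Ioo_atB_atTop {g : ℝ → ℝ} {a : ℝ} {b : EReal} (hab : (a : EReal) < b)
    (hg : ContinuousOn g (stInt a b)) (hg₀ : ∀ x ∈ stInt a b, 0 ≤ g x)
    (hfin : ∀ x ∈ stInt a b, IntegrableOn g (Ioo a x)) (hinf : ¬ IntegrableOn g (stInt a b)) :
    Tendsto (fun x => ∫ u in Ioo a x, g u) (atB b) atTop := by
  have hmeas : AEStronglyMeasurable g (volume.restrict (stInt a b)) :=
    hg.aestronglyMeasurable (isOpen_stInt a b).measurableSet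
  have htop : ∫⁻ u in stInt a b, ENNReal.ofReal (g u) = ⊤ := by
    by_contra h
    exact hinf ((lintegral_ofReal_ne_top_iff_integrable hmeas
      (ae_restrict_of_forall_mem (isOpen_stInt a b).measurableSet hg₀)).1 h)
  have hlim := (aecover_Ioo_atB a b).lintegral_tendsto_of_countably_generated
    hmeas.aemeasurable.ennreal_ofReal
  rw [htop] at hlim
  refine tendsto_atTop.2 fun C => ?_
  filter_upwards [hlim.eventually (eventually_gt_nhds (ENNReal.ofReal_lt_top (r := C))),
    stInt_mem_atB hab] with x hC hx
  have hsub : Ioo a x ⊆ stInt a b := Ioo_subset_stInt hx.2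
  rw [Measure.restrict_restrict measurableSet_Ioo, inter_eq_left.2 hsub,
    ← ofReal_integral_eq_lintegral_ofReal (hfin x hx)
      (ae_restrict_of_forall_mem measurableSet_Ioo fun u hu => hg₀ u (hsub hu))] at hC
  exact (ENNReal.ofReal_lt_ofReal_iff'.1 hC).1.le

lemma hasDerivAt_integral_of_continuousOn {f : ℝ → ℝ} {S : Set ℝ} [S.OrdConnected]
    (hS : IsOpen S) (hf : ContinuousOn f S) {x₀ t : ℝ} (hx₀ : x₀ ∈ S) (ht : t ∈ S) :
    HasDerivAt (fun x => ∫ y in x₀..x, f y) (f t) t :=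
  intervalIntegral.integral_hasDerivAt_right
    ((hf.mono (OrdConnected.uIcc_subset inferInstance hx₀ ht)).intervalIntegrable)
    (hf.stronglyMeasurableAtFilter hS t ht) (hf.continuousAt (hS.mem_nhds ht))

lemma sDen_pos {μ σ : ℝ → ℝ} {x₀ x : ℝ} : 0 < sDen μ σ x₀ x :=
  Real.exp_pos _

lemma mDen_pos {μ σ : ℝ → ℝ} {x₀ x : ℝ} (h : 0 < σ x ^ 2) : 0 < mDen μ σ x₀ x :=
  div_pos two_pos (mul_pos h sDen_pos)

section ScaleDensity

variable {μ σ : ℝ → ℝ} {x₀ : ℝ} {S : Set ℝ} [S.OrdConnected] (hS : IsOpen S) (hx₀ : x₀ ∈ S)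
  (hμ : ContinuousOn μ S) (hσ : ContinuousOn σ S) (hσpos : ∀ x ∈ S, 0 < σ x ^ 2)
include hS hx₀ hμ hσ hσpos

lemma hasDerivAt_integral_two_mul_div_sq {t : ℝ} (ht : t ∈ S) :
    HasDerivAt (fun x => ∫ y in x₀..x, 2 * μ y / σ y ^ 2) (2 * μ t / σ t ^ 2) t :=
  hasDerivAt_integral_of_continuousOn hS
    ((continuousOn_const.mul hμ).div (hσ.pow 2) fun x hx => (hσpos x hx).ne') hx₀ ht

lemma continuousOn_mDen : ContinuousOn (mDen μ σ x₀) S := by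
  have hs : ContinuousOn (sDen μ σ x₀) S := fun t ht =>
    (hasDerivAt_integral_two_mul_div_sq hS hx₀ hμ hσ hσpos ht).continuousAt.neg.rexp
      |>.continuousWithinAt
  exact continuousOn_const.div ((hσ.pow 2).mul hs) fun x hx =>
    (mul_pos (hσpos x hx) sDen_pos).ne'

lemma hasDerivAt_sDen_inv {t : ℝ} (ht : t ∈ S) :
    HasDerivAt (fun x => (sDen μ σ x₀ x)⁻¹) (μ t * mDen μ σ x₀ t) t := by
  convert (hasDerivAt_integral_two_mul_div_sq hS hx₀ hμ hσ hσpos ht).exp using 1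
  · simp [sDen, Real.exp_neg]
  · have hσt := (hσpos t ht).ne'
    simp only [mDen, sDen, Real.exp_neg]
    field_simp

lemma integral_mul_mDen {x₁ x : ℝ} (hx₁ : x₁ ∈ S) (hx : x ∈ S) :
    ∫ u in x₁..x, μ u * mDen μ σ x₀ u = (sDen μ σ x₀ x)⁻¹ - (sDen μ σ x₀ x₁)⁻¹ := by
  have hsub := OrdConnected.uIcc_subset inferInstance hx₁ hx
  exact intervalIntegral.integral_eq_sub_of_hasDerivAt
    (fun t ht => hasDerivAt_sDen_inv hS hx₀ hμ hσ hσpos (hsub ht))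
    ((hμ.mul (continuousOn_mDen hS hx₀ hμ hσ hσpos)).mono hsub).intervalIntegrable

end ScaleDensity

lemma setIntegral_Ioo_sub_setIntegral_Ioo {g : ℝ → ℝ} {a x₁ x : ℝ} (ha : a ≤ x₁) (hle : x₁ ≤ x)
    (hg : IntegrableOn g (Ioo a x)) :
    (∫ u in Ioo a x, g u) - ∫ u in Ioo a x₁, g u = ∫ u in x₁..x, g u := by
  have hx : IntervalIntegrable g volume a x :=
    (intervalIntegrable_iff_integrableOn_Ioo_of_le (ha.trans hle)).2 hg
  have hx₁ : IntervalIntegrable g volume a x₁ :=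
    (intervalIntegrable_iff_integrableOn_Ioo_of_le ha).2 (hg.mono_set (Ioo_subset_Ioo_right hle))
  rw [← integral_Ioc_eq_integral_Ioo, ← integral_Ioc_eq_integral_Ioo,
    ← intervalIntegral.integral_of_le (ha.trans hle), ← intervalIntegral.integral_of_le ha,
    intervalIntegral.integral_interval_sub_left hx hx₁]

section SpeedMeasure

variable {μ σ : ℝ → ℝ} {x₀ a : ℝ} {b : EReal} (hx₀ : x₀ ∈ stInt a b)
  (hμ : ContinuousOn μ (stInt a b)) (hσ : ContinuousOn σ (stInt a b))
  (hσpos : ∀ x ∈ stInt a b, 0 < σ x ^ 2)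
  (hMfin : ∀ x ∈ stInt a b, IntegrableOn (mDen μ σ x₀) (Ioo a x))
include hx₀ hμ hσ hσpos hMfin

lemma inv_sDen_sub_le_mul_Mab_sub {r x₁ x : ℝ} (hx₁ : x₁ ∈ stInt a b) (hx : x ∈ stInt a b)
    (hle : x₁ ≤ x) (hr : ∀ u ∈ Icc x₁ x, μ u ≤ r) :
    (sDen μ σ x₀ x)⁻¹ - (sDen μ σ x₀ x₁)⁻¹ ≤ r * (Mab μ σ x₀ a x - Mab μ σ x₀ a x₁) := by
  have hsub : Icc x₁ x ⊆ stInt a b := Icc_subset_stInt hx₁.1 hx.2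
  have hm := (continuousOn_mDen (isOpen_stInt a b) hx₀ hμ hσ hσpos).mono hsub
  rw [Mab, Mab, setIntegral_Ioo_sub_setIntegral_Ioo hx₁.1.le hle (hMfin x hx),
    ← integral_mul_mDen (isOpen_stInt a b) hx₀ hμ hσ hσpos hx₁ hx,
    ← intervalIntegral.integral_const_mul]
  refine intervalIntegral.integral_mono_on hle
    (((hμ.mono hsub).mul hm).intervalIntegrable_of_Icc hle)
    ((continuousOn_const.mul hm).intervalIntegrable_of_Icc hle) fun u hu => ?_
  exact mul_le_mul_of_nonneg_right (hr u hu) (mDen_pos (hσpos u (hsub hu))).le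

lemma mul_Mab_sub_le_inv_sDen_sub {r x₁ x : ℝ} (hx₁ : x₁ ∈ stInt a b) (hx : x ∈ stInt a b)
    (hle : x₁ ≤ x) (hr : ∀ u ∈ Icc x₁ x, r ≤ μ u) :
    r * (Mab μ σ x₀ a x - Mab μ σ x₀ a x₁) ≤ (sDen μ σ x₀ x)⁻¹ - (sDen μ σ x₀ x₁)⁻¹ := by
  have hsub : Icc x₁ x ⊆ stInt a b := Icc_subset_stInt hx₁.1 hx.2
  have hm := (continuousOn_mDen (isOpen_stInt a b) hx₀ hμ hσ hσpos).mono hsub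
  rw [Mab, Mab, setIntegral_Ioo_sub_setIntegral_Ioo hx₁.1.le hle (hMfin x hx),
    ← integral_mul_mDen (isOpen_stInt a b) hx₀ hμ hσ hσpos hx₁ hx,
    ← intervalIntegral.integral_const_mul]
  refine intervalIntegral.integral_mono_on hle
    ((continuousOn_const.mul hm).intervalIntegrable_of_Icc hle)
    (((hμ.mono hsub).mul hm).intervalIntegrable_of_Icc hle) fun u hu => ?_
  exact mul_le_mul_of_nonneg_right (hr u hu) (mDen_pos (hσpos u (hsub hu))).le

lemma not_eventually_le_of_neg (hM : Tendsto (Mab μ σ x₀ a) (atB b) atTop) {r : ℝ} (hr : r < 0) :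
    ¬ ∀ᶠ x in atB b, μ x ≤ r := by
  intro h
  have hab : (a : EReal) < b := coe_lt_of_mem_stInt hx₀
  obtain ⟨x₁, hx₁, hμr⟩ := exists_forall_ge_of_eventually_atB hab h
  have hbot : Tendsto (fun x => (sDen μ σ x₀ x₁)⁻¹ + r * (Mab μ σ x₀ a x - Mab μ σ x₀ a x₁))
      (atB b) atBot :=
    tendsto_atBot_add_const_left _ _
      ((tendsto_atTop_add_const_right _ _ hM).const_mul_atTop_of_neg hr)
  obtain ⟨x, hx, hx₁x, hneg⟩ := (Eventually.and (stInt_mem_atB hab)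
    (Eventually.and (stInt_mem_atB hx₁.2) (hbot.eventually_lt_atBot 0))).exists
  have key := inv_sDen_sub_le_mul_Mab_sub hx₀ hμ hσ hσpos hMfin hx₁ hx hx₁x.1.le
    fun u hu => hμr u (Icc_subset_stInt hx₁.1 hx.2 hu) hu.1
  have hs : 0 < sDen μ σ x₀ x := sDen_pos
  linarith [inv_pos.2 hs]

lemma not_eventually_ge_of_pos (hM : Tendsto (Mab μ σ x₀ a) (atB b) atTop)
    (hsM : Tendsto (fun x => sDen μ σ x₀ x * Mab μ σ x₀ a x) (atB b) atTop) {r : ℝ} (hr : 0 < r) :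
    ¬ ∀ᶠ x in atB b, r ≤ μ x := by
  intro h
  have hab : (a : EReal) < b := coe_lt_of_mem_stInt hx₀
  obtain ⟨x₁, hx₁, hμr⟩ := exists_forall_ge_of_eventually_atB hab h
  set s₁ := sDen μ σ x₀ x₁
  set M₁ := Mab μ σ x₀ a x₁
  obtain ⟨x, hx, hx₁x, hMx, hsMx⟩ := (Eventually.and (stInt_mem_atB hab)
    (Eventually.and (stInt_mem_atB hx₁.2) ((hM.eventually_ge_atTop M₁).and
      (hsM.eventually_gt_atTop (s₁ * M₁ + 1 / r))))).exists
  have key := mul_Mab_sub_le_inv_sDen_sub hx₀ hμ hσ hσpos hMfin hx₁ hx hx₁x.1.le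
    fun u hu => hμr u (Icc_subset_stInt hx₁.1 hx.2 hu) hu.1
  set s := sDen μ σ x₀ x
  set D := Mab μ σ x₀ a x - M₁
  have hs : 0 < s := sDen_pos
  have hs₁ : 0 < s₁ := sDen_pos
  have hM₁ : 0 ≤ M₁ := setIntegral_nonneg measurableSet_Ioo fun u hu =>
    (mDen_pos (hσpos u (Ioo_subset_stInt hx₁.2 hu))).le
  have hrsD : r * (s * D) ≤ 1 - s / s₁ :=
    calc r * (s * D) = s * (r * D) := by ring
      _ ≤ s * (s⁻¹ - s₁⁻¹) := mul_le_mul_of_nonneg_left key hs.le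
      _ = 1 - s / s₁ := by field_simp
  have hss₁ : s ≤ s₁ := by
    have : 0 ≤ r * (s * D) := mul_nonneg hr.le (mul_nonneg hs.le (sub_nonneg.2 hMx))
    exact (div_le_one hs₁).1 (by linarith)
  have hsD : s * D ≤ 1 / r := by
    rw [le_div_iff₀ hr]
    linarith [div_pos hs hs₁]
  have hsM₁ : s * M₁ ≤ s₁ * M₁ := mul_le_mul_of_nonneg_right hss₁ hM₁
  linarith

end SpeedMeasure

theorem statement3_general    (a : ℝ) (b : EReal)
    (μ σ : ℝ → ℝ) (x₀ : ℝ) (hx₀ : x₀ ∈ stInt a b)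
    (hμcont : ContinuousOn μ (stInt a b)) (hσcont : ContinuousOn σ (stInt a b))
    (hσpos : ∀ x ∈ stInt a b, 0 < (σ x) ^ 2)
    (hMfin : ∀ x ∈ stInt a b, IntegrableOn (mDen μ σ x₀) (Set.Ioo a x))
    (hsMb : Tendsto (fun x => sDen μ σ x₀ x * Mab μ σ x₀ a x) (atB b) atTop)
    (hμb : ∃ L : EReal, Tendsto (fun x => ((μ x : ℝ) : EReal)) (atB b) (𝓝 L))
    (hMinf : ¬ IntegrableOn (mDen μ σ x₀) (stInt a b)) :
    Tendsto μ (atB b) (𝓝 (0 : ℝ)) := by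
  have hab : (a : EReal) < b := coe_lt_of_mem_stInt hx₀
  have hM : Tendsto (Mab μ σ x₀ a) (atB b) atTop :=
    tendsto_setIntegral_Ioo_atB_atTop hab
      (continuousOn_mDen (isOpen_stInt a b) hx₀ hμcont hσcont hσpos)
      (fun x hx => (mDen_pos (hσpos x hx)).le) hMfin hMinf
  obtain ⟨L, hL⟩ := hμb
  obtain rfl : L = 0 := by
    by_contra hL0
    rcases lt_or_gt_of_ne hL0 with hneg | hpos
    · obtain ⟨r, hLr, hr⟩ := EReal.exists_between_coe_real hneg
      exact not_eventually_le_of_neg hx₀ hμcont hσcont hσpos hMfin hM (by exact_mod_cast hr)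
        ((hL.eventually_lt_const hLr).mono fun x hx => (EReal.coe_lt_coe_iff.1 hx).le)
    · obtain ⟨r, hr, hLr⟩ := EReal.exists_between_coe_real hpos
      exact not_eventually_ge_of_pos hx₀ hμcont hσcont hσpos hMfin hM hsMb (by exact_mod_cast hr)
        ((hL.eventually_const_lt hLr).mono fun x hx => (EReal.coe_lt_coe_iff.1 hx).le)
  exact EReal.tendsto_coe.1 hL

theorem statement3    (a : ℝ) (b : EReal) (hab : (a : EReal) < b)
    (μ σ : ℝ → ℝ) (x₀ : ℝ) (hx₀ : x₀ ∈ stInt a b)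
    (hμcont : ContinuousOn μ (stInt a b)) (hσcont : ContinuousOn σ (stInt a b))
    (hσpos : ∀ x ∈ stInt a b, 0 < (σ x) ^ 2)
    (hMfin : ∀ x ∈ stInt a b, IntegrableOn (mDen μ σ x₀) (Set.Ioo a x))
    (hsa : Tendsto (sDen μ σ x₀) (𝓝[>] a) atTop)
    (hsMb : Tendsto (fun x => sDen μ σ x₀ x * Mab μ σ x₀ a x) (atB b) atTop)
    (μa : ℝ) (hμa : Tendsto μ (𝓝[>] a) (𝓝 μa))
    (hμb : ∃ L : EReal, Tendsto (fun x => ((μ x : ℝ) : EReal)) (atB b) (𝓝 L))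
    (hMinf : ¬ IntegrableOn (mDen μ σ x₀) (stInt a b)) :
    Tendsto μ (atB b) (𝓝 (0 : ℝ)) :=
  statement3_general a b μ σ x₀ hx₀ hμcont hσcont hσpos hMfin hsMb hμb hMinf
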